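/- arXiv:1706.02546 — 3 statements merged into one kernel-verified Lean document; each statement's English description precedes it below -/
import Mathlib

section
/- Every partial $0$-cocycle $w \in Z^0(G,\mathcal{A})$ of a unital partial action $\alpha$ of $G$ on a commutative unital ring $\mathcal{A}$ is globalizable, and its globalization is unique: it is the constant function $u \in \mathcal{U}(\mathcal{F}(G,\mathcal{A}))$ with $u(t) = w$ for all $t$, which is an invertible multiplier of the enveloping ring $\mathcal{B}$ fixed by the action $\beta^*$. -/
variable {G : Type*} [Group G]

/-- Ordered product `x₁ ⋯ x_k` of the first `k` entries of a tuple. -/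
def pprodG {n : ℕ} (x : Fin n → G) (k : ℕ) : G := ((List.ofFn x).take k).prod

/-- The tuple obtained from `(x₁,…,x_{n+1})` by multiplying the entries in positions
`i, i+1` (0-indexed). -/
def dface {n : ℕ} (i : Fin n) (x : Fin (n + 1) → G) : Fin n → G :=
  fun j => if (j : ℕ) < (i : ℕ) then x j.castSucc
    else if j = i then x i.castSucc * x i.succ
    else x j.succ

/-- A unital partial action of `G` on a commutative unital ring `A` (a unital partial
`G`-module): each domain `D g = (e g)·A` is generated by a central idempotent `e g`,
`D 1 = A`, and the partial isomorphisms `α g : D g⁻¹ → D g` (restrictions of the globally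
defined maps `act g`) satisfy the partial action axioms. -/
structure UPA (G A : Type*) [Group G] [CommRing A] where
  e : G → A
  idem : ∀ g, e g * e g = e g
  e_one : e 1 = 1
  act : G → A → A
  act_one : ∀ a, act 1 a = a
  act_mem : ∀ g a, e g⁻¹ * a = a → e g * act g a = act g a
  act_add : ∀ g a b, e g⁻¹ * a = a → e g⁻¹ * b = b → act g (a + b) = act g a + act g b
  act_mul : ∀ g a b, e g⁻¹ * a = a → e g⁻¹ * b = b → act g (a * b) = act g a * act g b
  act_e : ∀ g h, act g (e g⁻¹ * e h) = e g * e (g * h)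
  act_inv : ∀ g a, e g⁻¹ * a = a → act g⁻¹ (act g a) = a
  act_comp : ∀ g h a, e h⁻¹ * e (h⁻¹ * g⁻¹) * a = a → act g (act h a) = act (g * h) a

variable {A : Type*} [CommRing A]

/-- The idempotent `1_{(x₁,…,xₙ)} = 1_{x₁} 1_{x₁x₂} ⋯ 1_{x₁⋯xₙ}`. -/
def UPA.pe (S : UPA G A) {n : ℕ} (x : Fin n → G) : A :=
  ∏ i : Fin n, S.e (pprodG x ((i : ℕ) + 1))

/-- `w` is a partial `n`-cochain valued in the ideals `D_{(x₁,…,xₙ)}`. -/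
def UPA.IsCochain (S : UPA G A) {n : ℕ} (w : (Fin n → G) → A) : Prop :=
  ∀ x, S.pe x * w x = w x

/-- `w, winv` are mutually inverse partial `n`-cochains (inverses in the unital ideals
`D_{(x₁,…,xₙ)}` with identities `pe x`). -/
def UPA.InvPair (S : UPA G A) {n : ℕ} (w winv : (Fin n → G) → A) : Prop :=
  S.IsCochain w ∧ S.IsCochain winv ∧ ∀ x, w x * winv x = S.pe x

/-- `psel w winv k` is `w` for even `k` and `winv` for odd `k`: it implements the
exponent `(-1)^k` with inverses taken in the appropriate ideals. -/
def psel {n : ℕ} (w winv : (Fin n → G) → A) (k : ℕ) (y : Fin n → G) : A :=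
  if Even k then w y else winv y

/-- The partial coboundary
`(δⁿ w)(x₁,…,x_{n+1}) = α_{x₁}(1_{x₁⁻¹} w(x₂,…,x_{n+1})) ·
∏ᵢ w(x₁,…,xᵢxᵢ₊₁,…,x_{n+1})^{(-1)ᶦ} · w(x₁,…,xₙ)^{(-1)^{n+1}}`,
computed with a chosen ideal-inverse `winv` of `w`. -/
def UPA.pdelta (S : UPA G A) {n : ℕ} (w winv : (Fin n → G) → A)
    (x : Fin (n + 1) → G) : A :=
  S.act (x 0) (S.e (x 0)⁻¹ * w (Fin.tail x)) *
    (∏ i : Fin n, psel w winv ((i : ℕ) + 1) (dface i x)) *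
    psel w winv (n + 1) (Fin.init x)

/-- `w` (with ideal-inverse `winv`) is a partial `n`-cocycle: `δⁿ w = e_{n+1}`. -/
def UPA.IsCocyclePair (S : UPA G A) {n : ℕ} (w winv : (Fin n → G) → A) : Prop :=
  S.InvPair w winv ∧ ∀ x : Fin (n + 1) → G, S.pdelta w winv x = S.pe x

/-- The canonical embedding `φ : A → F(G,A)`, `φ(a)(t) = α_{t⁻¹}(1_t a)`. -/
def UPA.emb (S : UPA G A) (a : A) : G → A := fun t => S.act t⁻¹ (S.e t * a)

/-- The translation action `β_x(f)(t) = f(x⁻¹ t)` on `F(G,A)`. -/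
def tr (x : G) (f : G → A) : G → A := fun t => f (x⁻¹ * t)

/-- The enveloping ring `B = Σ_{g ∈ G} β_g(φ(A)) ⊆ F(G,A)` of the partial action. -/
def UPA.env (S : UPA G A) : NonUnitalSubring (G → A) :=
  NonUnitalSubring.closure {f | ∃ g a, f = tr g (S.emb a)}

/-- `m` is a multiplier of the enveloping ring `B`: it preserves `B`, is additive on `B`,
and satisfies `m(fg) = m(f)g` (in the commutative setting this is a full multiplier). -/
def UPA.IsMultB (S : UPA G A) (m : (G → A) → (G → A)) : Prop :=
  (∀ f ∈ S.env, m f ∈ S.env) ∧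
  (∀ f g, f ∈ S.env → g ∈ S.env → m (f + g) = m f + m g) ∧
  (∀ f g, f ∈ S.env → g ∈ S.env → m (f * g) = m f * g)

/-- `m, m'` are mutually inverse (invertible) multipliers of the enveloping ring `B`. -/
def UPA.InvMultPair (S : UPA G A) (m m' : (G → A) → (G → A)) : Prop :=
  S.IsMultB m ∧ S.IsMultB m' ∧ ∀ f ∈ S.env, m (m' f) = f ∧ m' (m f) = f

/-- The action `β*` of `G` on multipliers of `B`: `β*_x(m) = β_x ∘ m ∘ β_x⁻¹`. -/
def bstar (x : G) (m : (G → A) → (G → A)) : (G → A) → (G → A) :=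
  fun f => tr x (m (tr x⁻¹ f))

/-- `msel u uinv k` is `u` for even `k` and `uinv` for odd `k` (the exponent `(-1)^k`
in the group of invertible multipliers). -/
def msel {n : ℕ} (u uinv : (Fin n → G) → (G → A) → (G → A)) (k : ℕ)
    (y : Fin n → G) : (G → A) → (G → A) :=
  if Even k then u y else uinv y

/-- The (multiplicatively written) classical coboundary of a multiplier-valued cochain:
`(δⁿ u)(x₁,…,x_{n+1}) = β*_{x₁}(u(x₂,…,x_{n+1})) · ∏ᵢ u(x₁,…,xᵢxᵢ₊₁,…)^{(-1)ᶦ} ·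
u(x₁,…,xₙ)^{(-1)^{n+1}}`, the product being composition of multipliers. -/
def mdelta {n : ℕ} (u uinv : (Fin n → G) → (G → A) → (G → A))
    (x : Fin (n + 1) → G) : (G → A) → (G → A) :=
  bstar (x 0) (u (Fin.tail x)) ∘
    (List.ofFn (fun i : Fin n => msel u uinv ((i : ℕ) + 1) (dface i x))).foldr (· ∘ ·) id ∘
    msel u uinv (n + 1) (Fin.init x)

/-- `u` (with pointwise inverse `uinv`) is a classical `n`-cocycle of `G` with values in
the unit group of the multiplier ring of the enveloping ring `B`, for the action `β*`. -/
def UPA.GCocyclePair (S : UPA G A) {n : ℕ}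
    (u uinv : (Fin n → G) → (G → A) → (G → A)) : Prop :=
  (∀ x, S.InvMultPair (u x) (uinv x)) ∧
  ∀ (x : Fin (n + 1) → G), ∀ f ∈ S.env, mdelta u uinv x f = f

/-- `u` is a globalization of the partial `n`-cocycle `w`:
`φ(w(x₁,…,xₙ)) = φ(1_{(x₁,…,xₙ)}) · u(x₁,…,xₙ)`. -/
def UPA.Globalizes (S : UPA G A) {n : ℕ}
    (u : (Fin n → G) → (G → A) → (G → A)) (w : (Fin n → G) → A) : Prop :=
  ∀ x, u x (S.emb (S.pe x)) = S.emb (w x)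

/-!
If `w` is `α`-invariant, then `w · φ(a) = φ(w a)` for every `a`, because `φ(a)(t)` lies in
`D_{t⁻¹}`, where `w` acts as `1_{t⁻¹} w = α_{t⁻¹}(1_t w)`. Hence multiplication by `w`
maps the generators `β_g(φ(a))` of `B` into `B`, commutes with every `β_g`, and sends `φ(1)`
to `φ(w)`. Conversely, a `β*`-invariant multiplier `m` with `m(φ(1)) = φ(w)` is forced on the
generators: `m(β_g φ(a)) = β_g(m(φ(1) φ(a))) = β_g(φ(w) φ(a)) = w · β_g φ(a)`, and a multiplier
of `B` is determined by its values on generators.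
-/

@[simp]
lemma tr_one {M : Type*} (f : G → M) : tr 1 f = f := by
  funext t; simp [tr]

@[simp]
lemma tr_inv_tr {M : Type*} (g : G) (f : G → M) : tr g⁻¹ (tr g f) = f := by
  funext t; simp [tr]

@[simp]
lemma tr_tr_inv {M : Type*} (g : G) (f : G → M) : tr g (tr g⁻¹ f) = f := by
  funext t; simp [tr]

lemma tr_smul {M N : Type*} [SMul M N] (g : G) (c : M) (f : G → N) :
    tr g (c • f) = c • tr g f :=
  rfl

lemma bstar_smul (x : G) (v : A) : bstar x (v • ·) = (v • · : (G → A) → (G → A)) := by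
  funext f; rw [bstar, tr_smul, tr_tr_inv]

namespace UPA

variable (S : UPA G A)

lemma e_mul_e_mul (g : G) (a : A) : S.e g * (S.e g * a) = S.e g * a := by
  rw [← mul_assoc, S.idem]

lemma act_e_inv (g : G) : S.act g (S.e g⁻¹) = S.e g := by
  simpa [S.e_one, S.idem] using S.act_e g 1

lemma e_inv_mul_emb (a : A) (t : G) : S.e t⁻¹ * S.emb a t = S.emb a t :=
  S.act_mem t⁻¹ _ (by rw [inv_inv]; exact S.e_mul_e_mul t a)

lemma emb_mul (a b : A) : S.emb a * S.emb b = S.emb (a * b) := by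
  funext t
  have hmem : ∀ c, S.e t⁻¹⁻¹ * (S.e t * c) = S.e t * c := fun c => by
    rw [inv_inv]; exact S.e_mul_e_mul t c
  calc S.act t⁻¹ (S.e t * a) * S.act t⁻¹ (S.e t * b)
      = S.act t⁻¹ (S.e t * a * (S.e t * b)) := (S.act_mul _ _ _ (hmem a) (hmem b)).symm
    _ = S.act t⁻¹ (S.e t * (a * b)) := by
      rw [show S.e t * a * (S.e t * b) = S.e t * S.e t * (a * b) by ring, S.idem]

lemma tr_emb_mem_env (g : G) (a : A) : tr g (S.emb a) ∈ S.env :=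
  NonUnitalSubring.subset_closure ⟨g, a, rfl⟩

lemma emb_mem_env (a : A) : S.emb a ∈ S.env := by
  simpa using S.tr_emb_mem_env 1 a

/-- Membership in the invariant subring `A^α`, whose units are the partial `0`-cocycles. -/
def IsInvariant (v : A) : Prop :=
  ∀ x : G, S.act x (S.e x⁻¹ * v) = S.e x * v

variable {S}

lemma IsInvariant.emb_apply {v : A} (hv : S.IsInvariant v) (t : G) :
    S.emb v t = S.e t⁻¹ * v := by
  simpa only [emb, inv_inv] using hv t⁻¹

lemma IsInvariant.smul_emb {v : A} (hv : S.IsInvariant v) (a : A) :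
    v • S.emb a = S.emb (v * a) := by
  funext t
  calc v * S.emb a t = S.e t⁻¹ * v * S.emb a t := by
        rw [mul_comm (S.e t⁻¹) v, mul_assoc, S.e_inv_mul_emb]
    _ = S.emb (v * a) t := by rw [← hv.emb_apply, ← S.emb_mul]; rfl

lemma IsInvariant.of_mul_eq_one {w winv : A} (hw : S.IsInvariant w) (hunit : w * winv = 1) :
    S.IsInvariant winv := by
  intro x
  set b := S.act x (S.e x⁻¹ * winv)
  have hb : S.e x * b = b := S.act_mem x _ (S.e_mul_e_mul _ _)
  have hbw : b * (S.e x * w) = S.e x := by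
    rw [← hw x, ← S.act_mul _ _ _ (S.e_mul_e_mul _ _) (S.e_mul_e_mul _ _),
      show S.e x⁻¹ * winv * (S.e x⁻¹ * w) = S.e x⁻¹ * S.e x⁻¹ * (w * winv) by ring,
      hunit, mul_one, S.idem, S.act_e_inv]
  calc b = S.e x * b * (w * winv) := by rw [hunit, mul_one, hb]
    _ = b * (S.e x * w) * winv := by ring
    _ = S.e x * winv := by rw [hbw]

lemma IsInvariant.smul_mem_env {v : A} (hv : S.IsInvariant v) {f : G → A} (hf : f ∈ S.env) :
    v • f ∈ S.env := by
  induction hf using NonUnitalSubring.closure_induction with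
  | mem f hf =>
    obtain ⟨g, a, rfl⟩ := hf
    rw [← tr_smul, hv.smul_emb]
    exact S.tr_emb_mem_env g _
  | zero => simp
  | add f f' _ _ hf hf' => simpa [smul_add] using add_mem hf hf'
  | neg f _ hf => simpa [smul_neg] using neg_mem hf
  | mul f f' _ hf' hf => simpa [smul_mul_assoc] using mul_mem hf hf'

lemma IsInvariant.isMultB_smul {v : A} (hv : S.IsInvariant v) : S.IsMultB (v • ·) :=
  ⟨fun _ hf => hv.smul_mem_env hf, fun f g _ _ => smul_add v f g,
    fun f g _ _ => (smul_mul_assoc v f g).symm⟩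

lemma IsInvariant.invMultPair_smul {w winv : A} (hw : S.IsInvariant w) (hunit : w * winv = 1) :
    S.InvMultPair (w • ·) (winv • ·) :=
  ⟨hw.isMultB_smul, (hw.of_mul_eq_one hunit).isMultB_smul, fun f _ =>
    ⟨by simp only [smul_smul, hunit, one_smul],
      by simp only [smul_smul, mul_comm winv, hunit, one_smul]⟩⟩

namespace IsMultB

variable {m : (G → A) → (G → A)}

lemma map_zero (hm : S.IsMultB m) : m 0 = 0 := by
  simpa using hm.2.1 0 0 S.env.zero_mem S.env.zero_mem

lemma map_neg (hm : S.IsMultB m) {f : G → A} (hf : f ∈ S.env) : m (-f) = -m f := by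
  have h := hm.2.1 f (-f) hf (neg_mem hf)
  rw [add_neg_cancel, hm.map_zero] at h
  exact eq_neg_of_add_eq_zero_right h.symm

lemma eqOn_env {m' : (G → A) → (G → A)} (hm : S.IsMultB m) (hm' : S.IsMultB m')
    (hgen : ∀ g a, m (tr g (S.emb a)) = m' (tr g (S.emb a))) :
    ∀ f ∈ S.env, m f = m' f := by
  intro f hf
  induction hf using NonUnitalSubring.closure_induction with
  | mem f hf => obtain ⟨g, a, rfl⟩ := hf; exact hgen g a
  | zero => rw [hm.map_zero, hm'.map_zero]
  | add f f' hf hf' ih ih' => rw [hm.2.1 f f' hf hf', hm'.2.1 f f' hf hf', ih, ih']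
  | neg f hf ih => rw [hm.map_neg hf, hm'.map_neg hf, ih]
  | mul f f' hf hf' ih _ => rw [hm.2.2 f f' hf hf', hm'.2.2 f f' hf hf', ih]

lemma eq_smul_of_bstar_invariant {w : A} (hw : S.IsInvariant w) (hm : S.IsMultB m)
    (hinv : ∀ x, ∀ f ∈ S.env, bstar x m f = m f) (hm1 : m (S.emb 1) = S.emb w) :
    ∀ f ∈ S.env, m f = w • f := by
  refine hm.eqOn_env hw.isMultB_smul fun g a => ?_
  have hemb : m (S.emb a) = w • S.emb a := by
    calc m (S.emb a) = m (S.emb 1 * S.emb a) := by rw [S.emb_mul, one_mul]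
      _ = S.emb w * S.emb a := by rw [hm.2.2 _ _ (S.emb_mem_env 1) (S.emb_mem_env a), hm1]
      _ = w • S.emb a := by rw [S.emb_mul, hw.smul_emb]
  rw [← hinv g _ (S.tr_emb_mem_env g a), bstar, tr_inv_tr, hemb, tr_smul]

end IsMultB

end UPA

/-- Every partial `0`-cocycle `w` (an invertible element of `A` with
`α_x(1_{x⁻¹} w) = 1_x w` for all `x`) is globalizable, and its globalization is unique:
it is the constant function `u` with `u(t) = w`, which is an invertible multiplier of the
enveloping ring `B` fixed by the action `β*`, it satisfies `φ(w) = φ(1_A)·u`, and any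
`β*`-invariant invertible multiplier `m` of `B` with `φ(w) = φ(1_A)·m` coincides with `u`
on `B`. -/
theorem stmt10 (S : UPA G A) (w winv : A) (hunit : w * winv = 1)
    (hz : ∀ x : G, S.act x (S.e x⁻¹ * w) = S.e x * w) :
    let mu : (G → A) → (G → A) := fun f t => w * f t
    let mu' : (G → A) → (G → A) := fun f t => winv * f t
    S.InvMultPair mu mu' ∧
    (∀ (x : G), ∀ f ∈ S.env, bstar x mu f = mu f) ∧
    mu (S.emb 1) = S.emb w ∧
    (∀ m m' : (G → A) → (G → A), S.InvMultPair m m' →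
      (∀ (x : G), ∀ f ∈ S.env, bstar x m f = m f) →
      m (S.emb 1) = S.emb w → ∀ f ∈ S.env, m f = mu f) := by
  have hw : S.IsInvariant w := hz
  refine ⟨hw.invMultPair_smul hunit, fun x f _ => congrFun (bstar_smul x w) f, ?_, ?_⟩
  · exact (hw.smul_emb 1).trans (congrArg S.emb (mul_one w))
  · exact fun m _ hm hinv hm1 => UPA.IsMultB.eq_smul_of_bstar_invariant hw hm.1 hinv hm1
end

section
/- Let $n \geq 1$ and $w \in Z^n(G,\mathcal{A})$ for a transitive unital partial action on the block product $\mathcal{A}$. Then $w(x_1,\dots,x_n) = \prod_{g\in\Lambda}\theta_g\big[w(g^{-1}x_1, x_2,\dots,x_n)\prod_{k=1}^{n-1}w(g^{-1},x_1,\dots,x_k x_{k+1},\dots,x_n)^{(-1)^k} w(g^{-1},x_1,\dots,x_{n-1})^{(-1)^n}\big]$. -/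
variable {G : Type*} [Group G]

variable {A : Type*} [CommRing A]

variable {Λ : Type*} [DecidableEq Λ] {R : Λ → Type*} [∀ l, CommRing (R l)]

/-- The identity of the block `A_l` viewed as an (indecomposable) idempotent of the
product ring `A = ∏ l, R l`. -/
def blk (l : Λ) : ∀ l, R l := Pi.single l 1

/-- `θ_g(a) = α_g(pr₁(a))`, where `pr₁` is the projection onto the base block `A_{l0}`
and `g = ι l` runs over `Λ`. -/
def thetaF (S : UPA G (∀ l, R l)) (ι : Λ → G) (l0 : Λ) (l : Λ)
    (a : ∀ l, R l) : ∀ l, R l :=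
  S.act (ι l) (Pi.single l0 (a l0))

/-!
Evaluate the cocycle identity `δⁿ w = 1` at `(g⁻¹, x₁, …, xₙ)`. Its first factor is
`u = α_{g⁻¹}(1_g w(x))`, and the remaining factors are the inverses of the factors of the
bracket `P` in the statement, so `P · Q = E` with `E` a product of idempotents, while
`u · Q = 1_{(g⁻¹,x)}`. Both `u` and `P` are absorbed by these idempotents, so
`u = E u = P (u Q) = P`. Finally `θ_g` projects onto the base block and applies `α_g`,
which carries the base block onto the block of `g`; this undoes `α_{g⁻¹}` on the
`g`-component and recovers the `g`-component of `w(x)`.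
-/

lemma pprodG_zero {m : ℕ} (x : Fin m → G) : pprodG x 0 = 1 := by simp [pprodG]

lemma pprodG_succ {m : ℕ} (x : Fin m → G) (k : ℕ) (h : k < m) :
    pprodG x (k + 1) = pprodG x k * x ⟨k, h⟩ := by
  have h' : k < (List.ofFn x).length := by simpa using h
  simp [pprodG, List.prod_take_succ _ _ h']

lemma pprodG_cons {m : ℕ} (a : G) (x : Fin m → G) (k : ℕ) :
    pprodG (Fin.cons a x) (k + 1) = a * pprodG x k := by
  simp [pprodG, List.ofFn_succ]

lemma pprodG_init {m : ℕ} (z : Fin (m + 1) → G) {k : ℕ} (hk : k ≤ m) :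
    pprodG (Fin.init z) k = pprodG z k := by
  induction k with
  | zero => simp [pprodG_zero]
  | succ k ih =>
    rw [pprodG_succ _ k hk, pprodG_succ z k (by omega), ih (by omega)]
    rfl

lemma dface_apply_of_lt {m : ℕ} (i : Fin m) (z : Fin (m + 1) → G) (j : Fin m)
    (h : (j : ℕ) < i) : dface i z j = z j.castSucc := if_pos h

lemma dface_apply_self {m : ℕ} (i : Fin m) (z : Fin (m + 1) → G) :
    dface i z i = z i.castSucc * z i.succ := by simp [dface]

lemma dface_apply_of_gt {m : ℕ} (i : Fin m) (z : Fin (m + 1) → G) (j : Fin m)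
    (h : (i : ℕ) < j) : dface i z j = z j.succ := by
  rw [dface, if_neg (by omega), if_neg (by rw [Fin.ext_iff]; omega)]

lemma pprodG_dface {m : ℕ} (i : Fin m) (z : Fin (m + 1) → G) {k : ℕ} (hk : k ≤ m) :
    pprodG (dface i z) k = if k ≤ i then pprodG z k else pprodG z (k + 1) := by
  induction k with
  | zero => simp [pprodG_zero]
  | succ k ih =>
    rw [pprodG_succ _ k hk, ih (by omega)]
    rcases lt_trichotomy k i with h | h | h
    · rw [dface_apply_of_lt i z ⟨k, hk⟩ h, if_pos h.le, if_pos (by omega),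
        pprodG_succ z k (by omega)]
      rfl
    · obtain rfl : (⟨k, hk⟩ : Fin m) = i := Fin.ext h
      rw [dface_apply_self, if_pos le_rfl, if_neg (by simp), pprodG_succ z (k + 1) (by omega),
        pprodG_succ z k (by omega), mul_assoc]
      rfl
    · rw [dface_apply_of_gt i z ⟨k, hk⟩ h, if_neg (by omega), if_neg (by omega),
        pprodG_succ z (k + 1) (by omega)]
      rfl

lemma Finset.prod_mul_eq_right_of_forall {ι M : Type*} [CommMonoid M] (s : Finset ι)
    (f : ι → M) (u : M) (h : ∀ i ∈ s, f i * u = u) : (∏ i ∈ s, f i) * u = u :=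
  Finset.prod_induction f (fun z => z * u = u)
    (fun a b ha hb => by rw [mul_assoc, hb, ha]) (one_mul u) h

namespace UPA

variable (S : UPA G A)

lemma pe_mul_of_forall {m : ℕ} (z : Fin m → G) (a : A)
    (h : ∀ k < m, S.e (pprodG z (k + 1)) * a = a) : S.pe z * a = a :=
  Finset.prod_mul_eq_right_of_forall _ _ _ fun k _ => h k k.isLt

lemma e_pprodG_mul_pe {m : ℕ} (z : Fin m → G) {k : ℕ} (hk : k < m) :
    S.e (pprodG z (k + 1)) * S.pe z = S.pe z := by
  rw [pe, ← Finset.mul_prod_erase _ _ (Finset.mem_univ ⟨k, hk⟩), ← mul_assoc, S.idem]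

lemma IsCochain.e_pprodG_mul {m : ℕ} {S : UPA G A} {v : (Fin m → G) → A}
    (hv : S.IsCochain v) (z : Fin m → G) {k : ℕ} (hk : k < m) :
    S.e (pprodG z (k + 1)) * v z = v z := by
  rw [← hv z, ← mul_assoc, S.e_pprodG_mul_pe z hk]

lemma pe_dface_mul_pe {m : ℕ} (i : Fin m) (z : Fin (m + 1) → G) :
    S.pe (dface i z) * S.pe z = S.pe z := by
  refine S.pe_mul_of_forall _ _ fun k hk => ?_
  rw [pprodG_dface i z hk]
  split_ifs <;> exact S.e_pprodG_mul_pe z (by omega)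

lemma pe_init_mul_pe {m : ℕ} (z : Fin (m + 1) → G) :
    S.pe (Fin.init z) * S.pe z = S.pe z := by
  refine S.pe_mul_of_forall _ _ fun k hk => ?_
  rw [pprodG_init z hk]
  exact S.e_pprodG_mul_pe z (by omega)

lemma e_mul_mul_act {g h : G} {a : A} (ha : S.e g⁻¹ * a = a) (hh : S.e h * a = a) :
    S.e (g * h) * S.act g a = S.act g a := by
  have hgh : S.e g⁻¹ * (S.e g⁻¹ * S.e h) = S.e g⁻¹ * S.e h := by rw [← mul_assoc, S.idem]
  have key : S.act g a = S.e g * S.e (g * h) * S.act g a := by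
    conv_lhs => rw [← ha, ← hh, ← mul_assoc]
    rw [S.act_mul g _ a hgh ha, S.act_e]
  rw [key, ← mul_assoc, mul_comm (S.e (g * h)), mul_assoc (S.e g), S.idem]

/-- `pe (g, x₁, …, xₘ) = e g · e (g x₁) ⋯`, and each factor absorbs `α_g a` by
`e_mul_mul_act`. -/
lemma pe_cons_mul_act {m : ℕ} (g : G) (x : Fin m → G) {a : A} (ha : S.e g⁻¹ * a = a)
    (hx : S.pe x * a = a) : S.pe (Fin.cons g x : Fin (m + 1) → G) * S.act g a = S.act g a := by
  refine S.pe_mul_of_forall _ _ fun k hk => ?_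
  rw [pprodG_cons]
  refine S.e_mul_mul_act ha ?_
  cases k with
  | zero => rw [pprodG_zero, S.e_one, one_mul]
  | succ k => rw [← hx, ← mul_assoc, S.e_pprodG_mul_pe x (by omega)]

lemma act_act_inv {g : G} {a : A} (ha : S.e g * a = a) : S.act g (S.act g⁻¹ a) = a := by
  simpa using S.act_inv g⁻¹ a (by rwa [inv_inv])

lemma psel_isCochain {m : ℕ} {w winv : (Fin m → G) → A} (hw : S.InvPair w winv) (k : ℕ) :
    S.IsCochain (psel w winv k) := by
  intro z
  unfold psel
  split
  exacts [hw.1 z, hw.2.1 z]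

lemma psel_mul_psel_succ {m : ℕ} {w winv : (Fin m → G) → A} (hw : S.InvPair w winv) (k : ℕ)
    (z : Fin m → G) : psel w winv k z * psel w winv (k + 1) z = S.pe z := by
  unfold psel
  rcases Nat.even_or_odd k with h | h
  · rw [if_pos h, if_neg (by simpa [Nat.even_add_one] using h)]
    exact hw.2.2 z
  · rw [if_neg (Nat.not_even_iff_odd.mpr h), if_pos (by simpa [Nat.even_add_one] using h),
      mul_comm]
    exact hw.2.2 z

variable {S}

/-- The cocycle identity at `(g, x)`, solved for its first factor `α_g(1_{g⁻¹} w(x))`. -/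
lemma IsCocyclePair.act_e_inv_mul_eq {n : ℕ} {w winv : (Fin (n + 1) → G) → A}
    (hw : S.IsCocyclePair w winv) (g : G) (x : Fin (n + 1) → G) :
    S.act g (S.e g⁻¹ * w x) =
      w (dface 0 (Fin.cons g x : Fin (n + 2) → G)) *
        (∏ i : Fin n,
          psel w winv ((i : ℕ) + 1) (dface i.succ (Fin.cons g x : Fin (n + 2) → G))) *
        psel w winv (n + 1) (Fin.init (Fin.cons g x : Fin (n + 2) → G)) := by
  obtain ⟨hinv, hcoc⟩ := hw
  set y : Fin (n + 2) → G := Fin.cons g x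
  set u := S.act g (S.e g⁻¹ * w x)
  set P := w (dface 0 y) * (∏ i : Fin n, psel w winv ((i : ℕ) + 1) (dface i.succ y)) *
    psel w winv (n + 1) (Fin.init y)
  set Q := psel w winv 1 (dface 0 y) *
    (∏ i : Fin n, psel w winv ((i : ℕ) + 1 + 1) (dface i.succ y)) *
    psel w winv (n + 1 + 1) (Fin.init y)
  set E := S.pe (dface 0 y) * (∏ i : Fin n, S.pe (dface i.succ y)) * S.pe (Fin.init y)
  have huQ : u * Q = S.pe y := by
    have := hcoc y
    simp only [pdelta, Fin.prod_univ_succ, Fin.val_succ, Fin.val_zero, zero_add] at this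
    rw [← this]
    simp only [u, Q, y, Fin.cons_zero, Fin.tail_cons]
    ring
  have hPQ : P * Q = E := by
    have hw0 : w (dface 0 y) = psel w winv 0 (dface 0 y) := (if_pos Even.zero).symm
    rw [show P * Q = (psel w winv 0 (dface 0 y) * psel w winv (0 + 1) (dface 0 y)) *
        ((∏ i : Fin n, psel w winv ((i : ℕ) + 1) (dface i.succ y)) *
          ∏ i : Fin n, psel w winv ((i : ℕ) + 1 + 1) (dface i.succ y)) *
        (psel w winv (n + 1) (Fin.init y) * psel w winv (n + 1 + 1) (Fin.init y)) by
          rw [← hw0]; ring,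
      ← Finset.prod_mul_distrib]
    simp only [S.psel_mul_psel_succ hinv, E]
  have hEu : E * u = u := by
    have hyu : S.pe y * u = u :=
      S.pe_cons_mul_act g x (by rw [← mul_assoc, S.idem]) (by rw [mul_left_comm, hinv.1 x])
    have hE : E * S.pe y = S.pe y := by
      rw [mul_assoc, S.pe_init_mul_pe, mul_assoc,
        Finset.prod_mul_eq_right_of_forall _ _ _ fun i _ => S.pe_dface_mul_pe i.succ y,
        S.pe_dface_mul_pe]
    rw [← hyu, ← mul_assoc, hE]
  have hyP : S.pe y * P = P := by
    refine S.pe_mul_of_forall _ _ fun k hk => ?_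
    by_cases hkn : k < n + 1
    · rw [mul_left_comm, ← pprodG_init y hkn,
        (S.psel_isCochain hinv (n + 1)).e_pprodG_mul _ hkn]
    · have hwface := hinv.1.e_pprodG_mul (dface 0 y) (k := n) (by omega)
      rw [pprodG_dface 0 y (by omega), if_neg (by simp)] at hwface
      obtain rfl : k = n + 1 := by omega
      simp only [P]
      rw [← mul_assoc, ← mul_assoc, hwface]
  calc u = E * u := hEu.symm
    _ = P * (u * Q) := by rw [← hPQ]; ring
    _ = P := by rw [huQ, mul_comm, hyP]

end UPA

lemma thetaF_act_inv_e_mul {S : UPA G (∀ l, R l)} {ι : Λ → G} {l0 μ : Λ}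
    (hdom : S.e (ι μ)⁻¹ * blk l0 = blk l0) (hact : S.act (ι μ) (blk l0) = blk μ)
    (a : ∀ l, R l) :
    thetaF S ι l0 μ (S.act (ι μ)⁻¹ (S.e (ι μ) * a)) = Pi.single μ (a μ) := by
  have hblk_mul (l : Λ) (b : ∀ l, R l) : blk l * b = Pi.single l (b l) := by
    rw [blk, ← Pi.single_mul_left, one_mul]
  have he : S.e (ι μ) * blk μ = blk μ := by
    rw [← hact]
    exact S.act_mem _ _ hdom
  have hblk : S.act (ι μ)⁻¹ (blk μ) = blk l0 := by
    rw [← hact]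
    exact S.act_inv _ _ hdom
  have hsingle : S.e (ι μ) * Pi.single μ (a μ) = Pi.single μ (a μ) := by
    rw [← hblk_mul, ← mul_assoc, he]
  have hinv : S.e (ι μ)⁻¹⁻¹ * S.e (ι μ) = S.e (ι μ) := by rw [inv_inv, S.idem]
  have hproj : Pi.single l0 (S.act (ι μ)⁻¹ (S.e (ι μ) * a) l0) =
      S.act (ι μ)⁻¹ (Pi.single μ (a μ)) := by
    rw [← hblk_mul, ← hblk,
      ← S.act_mul _ _ _ (by rwa [inv_inv]) (by rw [← mul_assoc, hinv]),
      ← mul_assoc, mul_comm (blk μ), he, hblk_mul]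
  rw [thetaF, hproj, S.act_act_inv hsingle]

/-- The product over `g ∈ Λ` of the informal statement is read componentwise: its
`μ`-component is the `μ`-component of the `θ_μ`-term. -/
theorem stmt15_general
    (S : UPA G (∀ l, R l)) (l0 : Λ)
    (ι : Λ → G)
    (hι_dom : ∀ l, S.e (ι l)⁻¹ * blk l0 = blk l0)
    (hι_act : ∀ l, S.act (ι l) (blk l0) = blk l)
    (n : ℕ) (w winv : (Fin (n + 1) → G) → (∀ l, R l))
    (hw : S.IsCocyclePair w winv) :
    ∀ (x : Fin (n + 1) → G) (μ : Λ),
      Pi.single μ (w x μ) =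
        thetaF S ι l0 μ
          (w (dface 0 (Fin.cons (ι μ)⁻¹ x : Fin (n + 2) → G)) *
           (∏ i : Fin n, psel w winv ((i : ℕ) + 1)
              (dface i.succ (Fin.cons (ι μ)⁻¹ x : Fin (n + 2) → G))) *
           psel w winv (n + 1) (Fin.init (Fin.cons (ι μ)⁻¹ x : Fin (n + 2) → G))) := by
  intro x μ
  rw [← hw.act_e_inv_mul_eq, inv_inv, thetaF_act_inv_e_mul (hι_dom μ) (hι_act μ)]

/-- (Lemma `w = ∏_g θ_g[…]`, for `n = N + 1 ≥ 1`.)  For a transitive unital partial action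
on the block product `A = ∏_{λ∈Λ} A_λ` and a partial `n`-cocycle `w ∈ Zⁿ(G, A)` (with
ideal-inverse `winv`):
`w(x₁,…,xₙ) = ∏_{g∈Λ} θ_g[ w(g⁻¹x₁,x₂,…,xₙ) ·
∏_{k=1}^{n-1} w(g⁻¹,x₁,…,x_k x_{k+1},…,xₙ)^{(-1)^k} · w(g⁻¹,x₁,…,x_{n-1})^{(-1)^n} ]`,
read componentwise: the `μ`-component of `w x` is the `μ`-component of the `θ_μ`-term
(`pr_μ (w x) = θ_μ(⋯)` as elements of `A`). -/
theorem stmt15 [∀ l, Nontrivial (R l)]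
    (hind : ∀ (l : Λ) (y : R l), y * y = y → y = 0 ∨ y = 1)
    (S : UPA G (∀ l, R l)) (l0 : Λ)
    (ι : Λ → G) (hι_inj : Function.Injective ι)
    (hι_dom : ∀ l, S.e (ι l)⁻¹ * blk l0 = blk l0)
    (hι_act : ∀ l, S.act (ι l) (blk l0) = blk l)
    (hι₀ : ι l0 = 1)
    (n : ℕ) (w winv : (Fin (n + 1) → G) → (∀ l, R l))
    (hw : S.IsCocyclePair w winv) :
    ∀ (x : Fin (n + 1) → G) (μ : Λ),
      Pi.single μ (w x μ) =
        thetaF S ι l0 μ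
          (w (dface 0 (Fin.cons (ι μ)⁻¹ x : Fin (n + 2) → G)) *
           (∏ i : Fin n, psel w winv ((i : ℕ) + 1)
              (dface i.succ (Fin.cons (ι μ)⁻¹ x : Fin (n + 2) → G))) *
           psel w winv (n + 1) (Fin.init (Fin.cons (ι μ)⁻¹ x : Fin (n + 2) → G))) :=
  stmt15_general S l0 ι hι_dom hι_act n w winv hw
end

section
/- Let $\alpha$ be a transitive unital partial action of $G$ on the block product $\mathcal{A} = \prod_{g\in\Lambda}\mathcal{A}_g$. For all $x \in G$ and all functions $a : \Lambda' \to \mathcal{A}$: $\alpha_x\big(1_{x^{-1}}\prod_{g\in\Lambda}\theta_g(a(g))\big) = 1_x \prod_{g\in\Lambda}\theta_g\circ\alpha_{\eta_1^g(x)}\big(1_{\eta_1^g(x)^{-1}} a(\overline{x^{-1}g})\big)$. -/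
variable {G : Type*} [Group G]

variable {A : Type*} [CommRing A]

variable {Λ : Type*} [DecidableEq Λ] {R : Λ → Type*} [∀ l, CommRing (R l)]

/-- `η(y) = y⁻¹ · ȳ`, with `ȳ = bar y` the representative of `y` in the fixed left
transversal `Λ'` of `H` in `G`; for `g ∈ Λ'`, `η₁^g(x) = η(x⁻¹ g)`. -/
def etaH (bar : G → G) (y : G) : G := y⁻¹ * bar y

lemma blk_idem (l : Λ) : (blk l : ∀ l, R l) * blk l = blk l := by
  funext m
  by_cases hm : m = l
  · subst hm; simp [blk, Pi.single_eq_same]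
  · simp [blk, Pi.single_eq_of_ne hm]

lemma mul_blk_eq (b : ∀ l, R l) (l : Λ) : b * blk l = Pi.single l (b l) := by
  funext m
  by_cases hm : m = l
  · subst hm; simp [blk, Pi.single_eq_same]
  · simp [blk, Pi.single_eq_of_ne hm]

lemma blk_mul_eq (b : ∀ l, R l) (l : Λ) : (blk l : ∀ l, R l) * b = Pi.single l (b l) := by
  rw [mul_comm]; exact mul_blk_eq b l

/-- Composition of partial actions on elements lying in appropriate domains. -/
lemma UPA.comp' {A : Type*} [CommRing A] (S : UPA G A) (g h : G) (a : A)
    (ha : S.e h⁻¹ * a = a) (hb : S.e g⁻¹ * S.act h a = S.act h a) :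
    S.e (g * h)⁻¹ * a = a ∧ S.act (g * h) a = S.act g (S.act h a) := by
  set b := S.act h a with hbdef
  have hb1 : S.e h * b = b := S.act_mem h a ha
  have hainv : S.act h⁻¹ b = a := S.act_inv h a ha
  have hmul1 : S.e h * (S.e h * S.e g⁻¹) = S.e h * S.e g⁻¹ := by
    rw [← mul_assoc, S.idem]
  have hmul2 : (S.e h * S.e g⁻¹) * b = b := by
    rw [mul_comm (S.e h) (S.e g⁻¹), mul_assoc, hb1, hb]
  have key : S.e h⁻¹ * S.e (h⁻¹ * g⁻¹) * a = a := by
    have he : S.act h⁻¹ (S.e (h⁻¹)⁻¹ * S.e g⁻¹) = S.e h⁻¹ * S.e (h⁻¹ * g⁻¹) :=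
      S.act_e h⁻¹ g⁻¹
    rw [inv_inv] at he
    calc S.e h⁻¹ * S.e (h⁻¹ * g⁻¹) * a
        = S.act h⁻¹ (S.e h * S.e g⁻¹) * S.act h⁻¹ b := by rw [he, hainv]
      _ = S.act h⁻¹ ((S.e h * S.e g⁻¹) * b) := by
          rw [← S.act_mul h⁻¹ _ _ (by rw [inv_inv]; exact hmul1) (by rw [inv_inv]; exact hb1)]
      _ = S.act h⁻¹ b := by rw [hmul2]
      _ = a := hainv
  have hcomp : S.act g (S.act h a) = S.act (g * h) a := S.act_comp g h a key
  have hdom : S.e (h⁻¹ * g⁻¹) * a = a := by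
    conv_lhs => rw [← key]
    rw [show S.e (h⁻¹ * g⁻¹) * (S.e h⁻¹ * S.e (h⁻¹ * g⁻¹) * a)
        = S.e h⁻¹ * (S.e (h⁻¹ * g⁻¹) * S.e (h⁻¹ * g⁻¹)) * a by ring, S.idem, key]
  rw [mul_inv_rev]
  exact ⟨hdom, hcomp.symm⟩

/-- (Lemma `apply α to a product of θ's`.)  With the transversal setup for a transitive
unital partial action on the block product `A = ∏_{λ∈Λ} A_λ`: for every `x ∈ G` and every
function `a : Λ' → A` (given as `a : G → A`, evaluated at transversal representatives),
`α_x(1_{x⁻¹} ∏_{g∈Λ} θ_g(a(g))) = 1_x ∏_{g∈Λ} θ_g(α_{η₁^g(x)}(1_{η₁^g(x)⁻¹} a(bar(x⁻¹ g))))`,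
infinite products over `Λ` being taken componentwise. -/
theorem stmt16 [∀ l, Nontrivial (R l)]
    (hind : ∀ (l : Λ) (y : R l), y * y = y → y = 0 ∨ y = 1)
    (S : UPA G (∀ l, R l)) (l0 : Λ)
    (bar : G → G)
    (hbar_mem : ∀ x, S.e (x⁻¹ * bar x)⁻¹ * blk l0 = blk l0 ∧
      S.act (x⁻¹ * bar x) (blk l0) = blk l0)
    (hbar_eq : ∀ x y, (S.e (x⁻¹ * y)⁻¹ * blk l0 = blk l0 ∧
      S.act (x⁻¹ * y) (blk l0) = blk l0) → bar x = bar y)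
    (hbar_one : bar 1 = 1)
    (ι : Λ → G) (hι_inj : Function.Injective ι)
    (hι_bar : ∀ l, bar (ι l) = ι l)
    (hι_dom : ∀ l, S.e (ι l)⁻¹ * blk l0 = blk l0)
    (hι_act : ∀ l, S.act (ι l) (blk l0) = blk l)
    (hι₀ : ι l0 = 1)
    (hblocks : ∀ (x : G) (l : Λ), S.e x⁻¹ * blk l = blk l →
      ∃ m : Λ, S.act x (blk l) = blk m)
    (x : G) (a : G → ∀ l, R l) :
    S.act x (S.e x⁻¹ * fun μ => thetaF S ι l0 μ (a (ι μ)) μ) =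
      S.e x * fun μ => thetaF S ι l0 μ
        (S.act (etaH bar (x⁻¹ * ι μ))
          (S.e (etaH bar (x⁻¹ * ι μ))⁻¹ * a (bar (x⁻¹ * ι μ)))) μ := by
  set f : ∀ l, R l := fun μ => thetaF S ι l0 μ (a (ι μ)) μ with hf
  have hLdom : S.e x⁻¹ * (S.e x⁻¹ * f) = S.e x⁻¹ * f := by
    rw [← mul_assoc, S.idem]
  have hLmem : S.e x * S.act x (S.e x⁻¹ * f) = S.act x (S.e x⁻¹ * f) :=
    S.act_mem x _ hLdom
  funext μ
  have hidem : (S.e x) μ * (S.e x) μ = (S.e x) μ := congrFun (S.idem x) μ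
  rcases hind μ _ hidem with h0 | h1
  · -- the component of `e x` at `μ` is zero: both sides vanish
    have hL : (S.act x (S.e x⁻¹ * f)) μ = 0 := by
      rw [← hLmem, Pi.mul_apply, h0, zero_mul]
    rw [hL, Pi.mul_apply, h0, zero_mul]
  · -- the component of `e x` at `μ` is one
    have hEμ : S.e x * blk μ = blk μ := by
      funext m
      by_cases hm : m = μ
      · subst hm; simp [blk, Pi.single_eq_same, h1]
      · simp [blk, Pi.single_eq_of_ne hm]
    obtain ⟨ν, hν⟩ := hblocks x⁻¹ μ (by rw [inv_inv]; exact hEμ)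
    have hνdom : S.e x⁻¹ * blk ν = blk ν := by
      rw [← hν]; exact S.act_mem x⁻¹ (blk μ) (by rw [inv_inv]; exact hEμ)
    have hxν : S.act x (blk ν) = blk μ := by
      have := S.act_inv x⁻¹ (blk μ) (by rw [inv_inv]; exact hEμ)
      rw [inv_inv] at this; rw [← hν]; exact this
    have hμblk : S.e (ι μ) * blk μ = blk μ := by
      rw [← hι_act μ]; exact S.act_mem _ _ (hι_dom μ)
    have hμinv : S.act (ι μ)⁻¹ (blk μ) = blk l0 := by
      have := S.act_inv (ι μ) (blk l0) (hι_dom μ)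
      rw [hι_act μ] at this; exact this
    -- step A : act (x * ι ν) blk l0 = blk μ
    obtain ⟨hAdom, hAact⟩ := S.comp' x (ι ν) (blk l0) (hι_dom ν)
      (by rw [hι_act ν]; exact hνdom)
    rw [hι_act ν, hxν] at hAact
    -- step B : with w := (ι μ)⁻¹ * (x * ι ν), act w blk l0 = blk l0
    set w : G := (ι μ)⁻¹ * (x * ι ν) with hw
    obtain ⟨hBdom, hBact⟩ := S.comp' (ι μ)⁻¹ (x * ι ν) (blk l0) hAdom
      (by rw [inv_inv, hAact]; exact hμblk)
    rw [hAact, hμinv] at hBact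
    -- bar (x⁻¹ * ι μ) = ι ν and etaH = w
    have hbar : bar (x⁻¹ * ι μ) = ι ν := by
      rw [← hι_bar ν]
      apply hbar_eq
      have hgrp : (x⁻¹ * ι μ)⁻¹ * ι ν = w := by rw [hw]; group
      rw [hgrp]
      exact ⟨hBdom, hBact⟩
    have hη : etaH bar (x⁻¹ * ι μ) = w := by
      unfold etaH; rw [hbar, hw]; group
    -- the common element t and its translates
    set t : ∀ l, R l := blk l0 * a (ι ν) with ht
    have htdom : ∀ (z : G), S.e z⁻¹ * blk l0 = blk l0 → S.e z⁻¹ * t = t := by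
      intro z hz
      rw [ht, ← mul_assoc, hz]
    have htν : S.e (ι ν)⁻¹ * t = t := htdom _ (hι_dom ν)
    have htself : blk l0 * t = t := by rw [ht, ← mul_assoc, blk_idem]
    set u : ∀ l, R l := S.act (ι ν) t with hu
    have hublk : blk ν * u = u := by
      calc blk ν * u = S.act (ι ν) (blk l0) * S.act (ι ν) t := by rw [hι_act ν, hu]
        _ = S.act (ι ν) (blk l0 * t) := (S.act_mul (ι ν) _ _ (hι_dom ν) htν).symm
        _ = u := by rw [htself, hu]
    have hudom : S.e x⁻¹ * u = u := by
      rw [← hublk, ← mul_assoc, hνdom]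
    -- LHS * blk μ
    obtain ⟨hCdom, hCact⟩ := S.comp' x (ι ν) t htν (by rw [← hu]; exact hudom)
    have hfν : f ν = u ν := by
      have : Pi.single l0 (a (ι ν) l0) = t := (blk_mul_eq (a (ι ν)) l0).symm
      rw [hf]; simp only [thetaF]; rw [this, hu]
    have hLblk : S.act x (S.e x⁻¹ * f) * blk μ = S.act (x * ι ν) t := by
      calc S.act x (S.e x⁻¹ * f) * blk μ
          = S.act x (S.e x⁻¹ * f) * S.act x (blk ν) := by rw [hxν]
        _ = S.act x ((S.e x⁻¹ * f) * blk ν) :=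
            (S.act_mul x _ _ hLdom hνdom).symm
        _ = S.act x u := by
            congr 1
            rw [mul_assoc, mul_blk_eq f ν, hfν, ← mul_blk_eq u ν, ← mul_assoc,
              mul_comm (S.e x⁻¹) u, mul_assoc, hνdom, mul_comm u (blk ν), hublk]
        _ = S.act (x * ι ν) t := by rw [hu, ← hCact]
    -- RHS at μ
    set c : ∀ l, R l := S.act w (S.e w⁻¹ * a (ι ν)) with hc
    have hwa : S.e w⁻¹ * (S.e w⁻¹ * a (ι ν)) = S.e w⁻¹ * a (ι ν) := by
      rw [← mul_assoc, S.idem]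
    have hblkc : blk l0 * c = S.act w t := by
      calc blk l0 * c = S.act w (blk l0) * S.act w (S.e w⁻¹ * a (ι ν)) := by
            rw [hBact, hc]
        _ = S.act w (blk l0 * (S.e w⁻¹ * a (ι ν))) :=
            (S.act_mul w _ _ hBdom hwa).symm
        _ = S.act w t := by
            congr 1
            rw [← mul_assoc, mul_comm (blk l0) (S.e w⁻¹), mul_assoc, ← ht,
              htdom w hBdom]
    have htw : S.e w⁻¹ * t = t := htdom w hBdom
    obtain ⟨hDdom, hDact⟩ := S.comp' (ι μ) w t htw
      (by rw [← hblkc, ← mul_assoc, hι_dom μ])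
    have hμw : ι μ * w = x * ι ν := by rw [hw]; group
    rw [hμw] at hDact
    -- put everything together
    have hblkμμ : (blk μ : ∀ l, R l) μ = 1 := by simp [blk, Pi.single_eq_same]
    have hLμ : (S.act x (S.e x⁻¹ * f)) μ = (S.act (x * ι ν) t) μ := by
      rw [← hLblk, Pi.mul_apply, hblkμμ, mul_one]
    rw [hLμ, Pi.mul_apply, h1, one_mul]
    simp only [thetaF, hη, hbar]
    rw [← hc, show Pi.single l0 (c l0) = blk l0 * c from (blk_mul_eq c l0).symm,
      hblkc, ← hDact]
end
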